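/- Every maximal safe path of length at least 2 in a flow graph contains at least one edge that is not the unique maximum incoming edge of its head, or else the path itself is a maximal chain of unique maximum incoming edges ending in an edge that is the unique maximum incoming edge of its head; in either case, the path has a representative edge e such that all edges of the path after e are unique maximum outgoing edges of their tails and all edges before e form left extensions along unique maximum incoming edges. -/

import Mathlib

open scoped Classical

/-- A flow graph: a finite DAG (witnessed by a topological order) with a positive
flow on each edge (zero off edges) satisfying conservation at internal vertices. -/
structure FlowGraph (V : Type*) [Fintype V] [DecidableEq V] where
  E : Finset (V × V)
  f : V → V → ℝ
  pos : ∀ e ∈ E, 0 < f e.1 e.2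
  zero_off : ∀ u v : V, (u, v) ∉ E → f u v = 0
  topo : V → ℕ
  topo_inj : Function.Injective topo
  topo_lt : ∀ e ∈ E, topo e.1 < topo e.2
  conserve : ∀ v : V, (∃ u, (u, v) ∈ E) → (∃ w, (v, w) ∈ E) →
    (∑ u, f u v) = (∑ w, f v w)

namespace FlowGraph

variable {V : Type*} [Fintype V] [DecidableEq V] (G : FlowGraph V)

/-- total flow into a vertex -/
noncomputable def flowIn (v : V) : ℝ := ∑ u, G.f u v

/-- total flow out of a vertex -/
noncomputable def flowOut (v : V) : ℝ := ∑ w, G.f v w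

def IsSource (v : V) : Prop := ∀ u, (u, v) ∉ G.E

def IsSink (v : V) : Prop := ∀ w, (v, w) ∉ G.E

/-- `p 0, p 1, ..., p k` is a path with `k` edges. -/
def IsPath (p : ℕ → V) (k : ℕ) : Prop := ∀ i < k, (p i, p (i + 1)) ∈ G.E

/-- Excess flow of the path `p 0, ..., p k` (forward expression):
`f(u₁,u₂) − Σ_{i=2}^{k−1} Σ_{v ≠ u_{i+1}} f(u_i, v)`. -/
noncomputable def excess (p : ℕ → V) (k : ℕ) : ℝ :=
  G.f (p 0) (p 1) - ∑ i ∈ Finset.Ico 1 k,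
    ∑ v ∈ Finset.univ.filter (fun v => v ≠ p (i + 1)), G.f (p i) v

/-- Excess flow of the path `p 0, ..., p k` (backward expression):
`f(u_{k−1},u_k) − Σ_{i=2}^{k−1} Σ_{v ≠ u_{i−1}} f(v, u_i)`. -/
noncomputable def excessB (p : ℕ → V) (k : ℕ) : ℝ :=
  G.f (p (k - 1)) (p k) - ∑ i ∈ Finset.Ico 1 k,
    ∑ v ∈ Finset.univ.filter (fun v => v ≠ p (i - 1)), G.f v (p i)

/-- `(u,v)` is the unique maximum incoming edge of `v`. -/
def UniqueMaxIn (u v : V) : Prop :=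
  (u, v) ∈ G.E ∧ ∀ w, (w, v) ∈ G.E → w ≠ u → G.f w v < G.f u v

/-- `(u,v)` is the unique maximum outgoing edge of `u`. -/
def UniqueMaxOut (u v : V) : Prop :=
  (u, v) ∈ G.E ∧ ∀ w, (u, w) ∈ G.E → w ≠ v → G.f u w < G.f u v

end FlowGraph

/-- A flow graph with a unique source `s` and a unique sink `t`. -/
structure FlowNetwork (V : Type*) [Fintype V] [DecidableEq V] extends FlowGraph V where
  s : V
  t : V
  s_source : ∀ u, (u, s) ∉ E
  t_sink : ∀ w, (t, w) ∉ E
  s_unique : ∀ v : V, (∀ u, (u, v) ∉ E) → v = s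
  t_unique : ∀ v : V, (∀ w, (v, w) ∉ E) → v = t

namespace FlowNetwork

variable {V : Type*} [Fintype V] [DecidableEq V]

/-- A flow decomposition: a finite family of positively weighted `s`-`t` paths whose
weights on each edge sum to the flow of that edge. -/
structure Decomp (N : FlowNetwork V) where
  n : ℕ
  path : Fin n → ℕ → V
  len : Fin n → ℕ
  w : Fin n → ℝ
  w_pos : ∀ i, 0 < w i
  is_path : ∀ i, N.toFlowGraph.IsPath (path i) (len i)
  starts : ∀ i, path i 0 = N.s
  ends : ∀ i, path i (len i) = N.t
  covers : ∀ e ∈ N.E,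
    (∑ i, ∑ j ∈ Finset.range (len i),
      if path i j = e.1 ∧ path i (j + 1) = e.2 then w i else 0) = N.f e.1 e.2

/-- `q 0..q l` occurs as a contiguous subpath of `p 0..p k`. -/
def Subpath (q : ℕ → V) (l : ℕ) (p : ℕ → V) (k : ℕ) : Prop :=
  ∃ o, o + l ≤ k ∧ ∀ j ≤ l, p (o + j) = q j

/-- Total weight of decomposition paths containing `q 0..q l` as a subpath. -/
noncomputable def coverWeight (N : FlowNetwork V) (D : N.Decomp) (q : ℕ → V) (l : ℕ) : ℝ :=
  ∑ i, if Subpath q l (D.path i) (D.len i) then D.w i else 0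

/-- `q 0..q l` is `w`-safe: every flow decomposition covers it with weight at least `w`. -/
def WSafe (N : FlowNetwork V) (q : ℕ → V) (l : ℕ) (w : ℝ) : Prop :=
  ∀ D : N.Decomp, w ≤ coverWeight N D q l

/-- `q 0..q l` is safe: in every flow decomposition it is a subpath of some
(positively weighted) decomposition path. -/
def SafePath (N : FlowNetwork V) (q : ℕ → V) (l : ℕ) : Prop :=
  ∀ D : N.Decomp, ∃ i, Subpath q l (D.path i) (D.len i)

end FlowNetwork

variable {V : Type*} [Fintype V] [DecidableEq V]

/-- A safe path that cannot be extended by a single edge on either side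
while remaining safe. -/
def FlowNetwork.MaximalSafePath (N : FlowNetwork V) (q : ℕ → V) (l : ℕ) : Prop :=
  FlowNetwork.SafePath N q l ∧
  (∀ v, (v, q 0) ∈ N.E →
    ¬ FlowNetwork.SafePath N (fun i => if i = 0 then v else q (i - 1)) (l + 1)) ∧
  (∀ v, (q l, v) ∈ N.E →
    ¬ FlowNetwork.SafePath N (Function.update q (l + 1) v) (l + 1))

/-!
Let `r` be the length of the longest prefix of `q` made of unique maximum incoming edges, capped at
`l - 1`, and suppose some later edge `b = (q j, q (j + 1))` is not a unique maximum outgoing edge.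
Since `a = (q r, q (r + 1))` is not a unique maximum incoming edge, the head of `a` has in-flow at
least `2 f(a)`, and the tail of `b` has out-flow at least `2 f(b)`. This leaves room for a subflow
`g ≤ f` with `g a = f a` and `g b = 0`: if `f a ≤ f b`, route the flow of `a` proportionally back
from its tail to `s` and on from its head to `t` avoiding `b`; otherwise route the flow of `b`
around `a` in the reversed network and take the complement. Decomposing `g` and `f - g` separately
into weighted `s`–`t` paths gives a flow decomposition in which no path uses both `a` and `b`, so
`q` is not safe.
-/

section Paths

variable {α : Type*}

def IsPosPath (g : α → α → ℝ) (p : ℕ → α) (k : ℕ) : Prop := ∀ m < k, 0 < g (p m) (p (m + 1))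

def Traverses (p : ℕ → α) (k : ℕ) (u v : α) : Prop := ∃ m < k, p m = u ∧ p (m + 1) = v

noncomputable def pathFlow [DecidableEq α] (p : ℕ → α) (k : ℕ) (u v : α) : ℝ :=
  ∑ m ∈ Finset.range k, if p m = u ∧ p (m + 1) = v then 1 else 0

variable {g : α → α → ℝ} {p : ℕ → α} {k : ℕ}

theorem IsPosPath.mono {g' : α → α → ℝ} (hp : IsPosPath g' p k) (hle : ∀ u v, g' u v ≤ g u v) :
    IsPosPath g p k :=
  fun m hm => (hp m hm).trans_le (hle _ _)

theorem IsPosPath.cons (hp : IsPosPath g p k) {u : α} (hu : 0 < g u (p 0)) :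
    IsPosPath g (fun m => if m = 0 then u else p (m - 1)) (k + 1) := by
  rintro (_ | m) hm
  · simpa using hu
  · simpa using hp m (by omega)

theorem IsPosPath.snoc (hp : IsPosPath g p k) {w : α} (hw : 0 < g (p k) w) :
    IsPosPath g (fun m => if m ≤ k then p m else w) (k + 1) := by
  intro m hm
  rcases Nat.lt_or_ge m k with h | h
  · simpa [h.le, Nat.succ_le_of_lt h] using hp m h
  · obtain rfl : m = k := by omega
    simpa using hw

theorem IsPosPath.not_traverses (hp : IsPosPath g p k) {u v : α} (h : g u v = 0) :
    ¬ Traverses p k u v := by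
  rintro ⟨m, hm, rfl, rfl⟩
  exact (hp m hm).ne' h

theorem FlowNetwork.Subpath.traverses {q : ℕ → α} {l : ℕ} {p : ℕ → α} {k : ℕ}
    (h : FlowNetwork.Subpath q l p k) {j : ℕ} (hj : j < l) : Traverses p k (q j) (q (j + 1)) := by
  obtain ⟨o, hol, hq⟩ := h
  exact ⟨o + j, by omega, hq j hj.le, hq (j + 1) hj⟩

theorem pathFlow_nonneg [DecidableEq α] (p : ℕ → α) (k : ℕ) (u v : α) : 0 ≤ pathFlow p k u v :=
  Finset.sum_nonneg fun _ _ => by split_ifs <;> norm_num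

theorem sum_ite_eq_mul_pathFlow [DecidableEq α] (p : ℕ → α) (k : ℕ) (u v : α) (w : ℝ) :
    ∑ m ∈ Finset.range k, (if p m = u ∧ p (m + 1) = v then w else 0) = w * pathFlow p k u v := by
  simp only [pathFlow, Finset.mul_sum, mul_ite, mul_one, mul_zero]

theorem pathFlow_eq_ite [DecidableEq α] (hp : Set.InjOn p (Set.Iic k)) (u v : α) :
    pathFlow p k u v = if Traverses p k u v then 1 else 0 := by
  split_ifs with h
  · obtain ⟨m, hm, rfl, rfl⟩ := h
    rw [pathFlow, Finset.sum_eq_single_of_mem m (Finset.mem_range.2 hm), if_pos ⟨rfl, rfl⟩]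
    intro m' hm' hne
    rw [if_neg]
    rintro ⟨heq, -⟩
    exact hne (hp (by simp at hm' ⊢; omega) (by simp; omega) heq)
  · exact Finset.sum_eq_zero fun m hm => if_neg fun huv => h ⟨m, by simpa using hm, huv⟩

theorem sum_pathFlow_in_eq_out [Fintype α] [DecidableEq α] {v : α} (h0 : p 0 ≠ v) (hk : p k ≠ v) :
    ∑ u, pathFlow p k u v = ∑ w, pathFlow p k v w := by
  have key := (Finset.sum_range_succ' (fun m => if p m = v then (1 : ℝ) else 0) k).symm.trans
    (Finset.sum_range_succ (fun m => if p m = v then (1 : ℝ) else 0) k)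
  simp only [h0, hk, if_false, add_zero] at key
  simp only [pathFlow, Finset.sum_comm (s := Finset.univ), ite_and, Finset.sum_ite_eq,
    Finset.mem_univ, if_true]
  rw [key]
  refine Finset.sum_congr rfl fun m _ => ?_
  split_ifs <;> simp

end Paths

namespace FlowGraph

variable (G : FlowGraph V)

theorem f_nonneg (u v : V) : 0 ≤ G.f u v := by
  by_cases h : (u, v) ∈ G.E
  · exact (G.pos _ h).le
  · exact (G.zero_off u v h).ge

theorem mem_E_of_f_pos {u v : V} (h : 0 < G.f u v) : (u, v) ∈ G.E := by
  by_contra hE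
  exact h.ne' (G.zero_off u v hE)

theorem f_le_flowIn (u v : V) : G.f u v ≤ G.flowIn v :=
  Finset.single_le_sum (fun x _ => G.f_nonneg x v) (Finset.mem_univ u)

theorem f_le_flowOut (u v : V) : G.f u v ≤ G.flowOut u :=
  Finset.single_le_sum (fun x _ => G.f_nonneg u x) (Finset.mem_univ v)

theorem edge_induction {P : V → Prop} (h : ∀ v, (∀ u, (u, v) ∈ G.E → P u) → P v) (v : V) :
    P v :=
  (measure G.topo).wf.induction v fun v ih => h v fun u hu => ih u (G.topo_lt _ hu)

theorem IsPath.topo_strictMonoOn {G : FlowGraph V} {p : ℕ → V} {k : ℕ} (hp : G.IsPath p k) :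
    StrictMonoOn (G.topo ∘ p) (Set.Iic k) :=
  strictMonoOn_Iic_of_lt_succ fun m hm => G.topo_lt _ (hp m hm)

theorem IsPath.injOn {G : FlowGraph V} {p : ℕ → V} {k : ℕ} (hp : G.IsPath p k) :
    Set.InjOn p (Set.Iic k) :=
  hp.topo_strictMonoOn.injOn.of_comp

theorem IsPath.lt_card {G : FlowGraph V} {p : ℕ → V} {k : ℕ} (hp : G.IsPath p k) :
    k < Fintype.card V := by
  have hinj : Set.InjOn p (Finset.range (k + 1)) := by
    simpa [Set.InjOn, Nat.lt_succ_iff] using hp.injOn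
  simpa using Finset.card_le_card_of_injOn p (fun _ _ => Finset.mem_univ _) hinj

theorem two_mul_le_flowIn_of_not_uniqueMaxIn {u v : V} (h : (u, v) ∈ G.E)
    (hn : ¬ G.UniqueMaxIn u v) : 2 * G.f u v ≤ G.flowIn v := by
  obtain ⟨w, -, hwu, hle⟩ : ∃ w, (w, v) ∈ G.E ∧ w ≠ u ∧ G.f u v ≤ G.f w v := by
    simpa [UniqueMaxIn, h] using hn
  have := Finset.add_le_sum (fun x _ => G.f_nonneg x v) (Finset.mem_univ u) (Finset.mem_univ w)
    hwu.symm
  rw [flowIn]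
  linarith

theorem two_mul_le_flowOut_of_not_uniqueMaxOut {u v : V} (h : (u, v) ∈ G.E)
    (hn : ¬ G.UniqueMaxOut u v) : 2 * G.f u v ≤ G.flowOut u := by
  obtain ⟨w, -, hwv, hle⟩ : ∃ w, (u, w) ∈ G.E ∧ w ≠ v ∧ G.f u v ≤ G.f u w := by
    simpa [UniqueMaxOut, h] using hn
  have := Finset.add_le_sum (fun x _ => G.f_nonneg u x) (Finset.mem_univ v) (Finset.mem_univ w)
    hwv.symm
  rw [flowOut]
  linarith

end FlowGraph

namespace FlowNetwork

variable (N : FlowNetwork V)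

theorem ne_t_of_mem_E {u v : V} (h : (u, v) ∈ N.E) : u ≠ N.t := by
  rintro rfl
  exact N.t_sink v h

theorem ne_s_of_mem_E {u v : V} (h : (u, v) ∈ N.E) : v ≠ N.s := by
  rintro rfl
  exact N.s_source u h

theorem flowIn_eq_flowOut {v : V} (hs : v ≠ N.s) (ht : v ≠ N.t) : N.flowIn v = N.flowOut v := by
  refine N.conserve v ?_ ?_ <;> by_contra! h
  exacts [hs (N.s_unique v h), ht (N.t_unique v h)]

theorem flowIn_le_flowOut {v : V} (ht : v ≠ N.t) : N.flowIn v ≤ N.flowOut v := by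
  by_cases hs : v = N.s
  · subst hs
    calc N.flowIn N.s = 0 := Finset.sum_eq_zero fun u _ => N.zero_off u N.s (N.s_source u)
      _ ≤ N.flowOut N.s := Finset.sum_nonneg fun w _ => N.f_nonneg N.s w
  · exact (N.flowIn_eq_flowOut hs ht).le

structure IsSubflow (g : V → V → ℝ) : Prop where
  nonneg : ∀ u v, 0 ≤ g u v
  le_f : ∀ u v, g u v ≤ N.f u v
  conserve : ∀ v, v ≠ N.s → v ≠ N.t → ∑ u, g u v = ∑ w, g v w

variable {N} {g : V → V → ℝ}

theorem IsSubflow.mem_E (hg : N.IsSubflow g) {u v : V} (h : 0 < g u v) : (u, v) ∈ N.E :=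
  N.mem_E_of_f_pos (h.trans_le (hg.le_f u v))

theorem IsSubflow.compl (hg : N.IsSubflow g) : N.IsSubflow fun u v => N.f u v - g u v where
  nonneg u v := sub_nonneg.2 (hg.le_f u v)
  le_f u v := sub_le_self _ (hg.nonneg u v)
  conserve v hs ht := by
    rw [Finset.sum_sub_distrib, Finset.sum_sub_distrib, hg.conserve v hs ht]
    exact congrArg (· - _) (N.flowIn_eq_flowOut hs ht)

theorem IsSubflow.exists_pos_in (hg : N.IsSubflow g) {v w : V} (hs : v ≠ N.s)
    (hvw : 0 < g v w) : ∃ u, 0 < g u v := by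
  have ht : v ≠ N.t := N.ne_t_of_mem_E (hg.mem_E hvw)
  have hpos : ∑ _u : V, (0 : ℝ) < ∑ u, g u v := by
    rw [Finset.sum_const_zero, hg.conserve v hs ht]
    exact hvw.trans_le (Finset.single_le_sum (fun x _ => hg.nonneg v x) (Finset.mem_univ w))
  simpa using Finset.exists_lt_of_sum_lt hpos

theorem IsSubflow.exists_pos_out (hg : N.IsSubflow g) {u v : V} (ht : v ≠ N.t)
    (huv : 0 < g u v) : ∃ w, 0 < g v w := by
  have hs : v ≠ N.s := N.ne_s_of_mem_E (hg.mem_E huv)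
  have hpos : ∑ _w : V, (0 : ℝ) < ∑ w, g v w := by
    rw [Finset.sum_const_zero, ← hg.conserve v hs ht]
    exact huv.trans_le (Finset.single_le_sum (fun x _ => hg.nonneg x v) (Finset.mem_univ u))
  simpa using Finset.exists_lt_of_sum_lt hpos

theorem _root_.IsPosPath.isPath {N : FlowNetwork V} {g : V → V → ℝ} {p : ℕ → V} {k : ℕ}
    (hg : N.IsSubflow g) (hp : IsPosPath g p k) : N.IsPath p k :=
  fun m hm => hg.mem_E (hp m hm)

/-- A longest `g`-positive path (lengths are bounded as the graph is acyclic) cannot be extended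
at either end, so by conservation it runs from `s` to `t`. -/
theorem IsSubflow.exists_posPath (hg : N.IsSubflow g) {a b : V} (hab : 0 < g a b) :
    ∃ p k, 0 < k ∧ IsPosPath g p k ∧ p 0 = N.s ∧ p k = N.t := by
  let P k := ∃ p, IsPosPath g p k
  have hbound : ∀ k, P k → k ≤ Fintype.card V := fun k ⟨_, hp⟩ => (hp.isPath hg).lt_card.le
  have h1 : P 1 := ⟨fun m => if m = 0 then a else b, by simpa [IsPosPath] using hab⟩
  have hK := Nat.le_findGreatest (hbound 1 h1) h1
  obtain ⟨p, hp⟩ := Nat.findGreatest_spec (hbound 1 h1) h1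
  set K := Nat.findGreatest P (Fintype.card V)
  have hmax : ¬ P (K + 1) := fun h => Nat.findGreatest_is_greatest (Nat.lt_succ_self K)
    (hbound _ h) h
  refine ⟨p, K, hK, hp, ?_, ?_⟩
  · by_contra hs
    obtain ⟨u, hu⟩ := hg.exists_pos_in hs (hp 0 hK)
    exact hmax ⟨_, hp.cons hu⟩
  · by_contra ht
    obtain ⟨w, hw⟩ := hg.exists_pos_out ht (Nat.sub_add_cancel hK ▸ hp (K - 1) (by omega))
    exact hmax ⟨_, hp.snoc hw⟩

variable (N) in
structure PathDecomp (g : V → V → ℝ) where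
  n : ℕ
  path : Fin n → ℕ → V
  len : Fin n → ℕ
  w : Fin n → ℝ
  w_pos : ∀ i, 0 < w i
  pos : ∀ i, IsPosPath g (path i) (len i)
  starts : ∀ i, path i 0 = N.s
  ends : ∀ i, path i (len i) = N.t
  sum_eq : ∀ u v, ∑ i, w i * pathFlow (path i) (len i) u v = g u v

def PathDecomp.cons {g' : V → V → ℝ} (D : N.PathDecomp g') {p : ℕ → V} {k : ℕ} {W : ℝ}
    (hW : 0 < W) (hp : IsPosPath g p k) (hs : p 0 = N.s) (ht : p k = N.t)
    (hle : ∀ u v, g' u v ≤ g u v) (heq : ∀ u v, W * pathFlow p k u v + g' u v = g u v) :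
    N.PathDecomp g where
  n := D.n + 1
  path := Fin.cons p D.path
  len := Fin.cons k D.len
  w := Fin.cons W D.w
  w_pos := Fin.forall_fin_succ.2 ⟨hW, D.w_pos⟩
  pos := Fin.forall_fin_succ.2 ⟨hp, fun i => (D.pos i).mono hle⟩
  starts := Fin.forall_fin_succ.2 ⟨hs, D.starts⟩
  ends := Fin.forall_fin_succ.2 ⟨ht, D.ends⟩
  sum_eq u v := by simp [Fin.sum_univ_succ, D.sum_eq, heq]

theorem IsSubflow.sub_pathFlow (hg : N.IsSubflow g) {p : ℕ → V} {k : ℕ} (hp : IsPosPath g p k)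
    (hs : p 0 = N.s) (ht : p k = N.t) {W : ℝ} (hW0 : 0 ≤ W)
    (hW : ∀ m < k, W ≤ g (p m) (p (m + 1))) :
    N.IsSubflow fun u v => g u v - W * pathFlow p k u v where
  nonneg u v := by
    rw [pathFlow_eq_ite (hp.isPath hg).injOn]
    split_ifs with h
    · obtain ⟨m, hm, rfl, rfl⟩ := h
      linarith [hW m hm]
    · simpa using hg.nonneg u v
  le_f u v := (sub_le_self _ (mul_nonneg hW0 (pathFlow_nonneg p k u v))).trans (hg.le_f u v)
  conserve v hvs hvt := by
    simp only [Finset.sum_sub_distrib, ← Finset.mul_sum, hg.conserve v hvs hvt,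
      sum_pathFlow_in_eq_out (hs ▸ Ne.symm hvs) (ht ▸ Ne.symm hvt)]

/-- Peeling off a `g`-positive `s`–`t` path with its bottleneck weight zeroes at least one
edge, so induction on the support of `g` terminates. -/
theorem IsSubflow.nonempty_pathDecomp (hg : N.IsSubflow g) : Nonempty (N.PathDecomp g) := by
  induction hn : (Finset.univ.filter fun e : V × V => g e.1 e.2 ≠ 0).card
    using Nat.strong_induction_on generalizing g with
  | _ n ih =>
  by_cases h0 : ∃ e : V × V, g e.1 e.2 ≠ 0
  swap
  · simp only [not_exists, not_not, Prod.forall] at h0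
    exact ⟨⟨0, Fin.elim0, Fin.elim0, Fin.elim0, Fin.rec0, Fin.rec0, Fin.rec0, Fin.rec0,
      by simp [h0]⟩⟩
  obtain ⟨⟨a, b⟩, hab⟩ := h0
  obtain ⟨p, k, hk, hp, hs, ht⟩ := hg.exists_posPath ((hg.nonneg a b).lt_of_ne' hab)
  obtain ⟨m₀, hm₀, hmin⟩ := Finset.exists_min_image (Finset.range k)
    (fun m => g (p m) (p (m + 1))) (Finset.nonempty_range_iff.2 hk.ne')
  rw [Finset.mem_range] at hm₀
  have hW := hp m₀ hm₀
  set W := g (p m₀) (p (m₀ + 1))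
  have hg' := hg.sub_pathFlow hp hs ht hW.le fun m hm => hmin m (by simpa using hm)
  have hle : ∀ u v, g u v - W * pathFlow p k u v ≤ g u v :=
    fun u v => sub_le_self _ (mul_nonneg hW.le (pathFlow_nonneg p k u v))
  have hzero : g (p m₀) (p (m₀ + 1)) - W * pathFlow p k (p m₀) (p (m₀ + 1)) = 0 := by
    rw [pathFlow_eq_ite (hp.isPath hg).injOn, if_pos ⟨m₀, hm₀, rfl, rfl⟩, mul_one, sub_self]
  have hcard : (Finset.univ.filter fun e : V × V =>
      g e.1 e.2 - W * pathFlow p k e.1 e.2 ≠ 0).card < n := by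
    refine hn ▸ Finset.card_lt_card (Finset.ssubset_iff_of_subset ?_ |>.2
      ⟨(p m₀, p (m₀ + 1)), by simpa using hW.ne', by simpa using hzero⟩)
    intro e
    simp only [Finset.mem_filter, Finset.mem_univ, true_and]
    exact fun he h0 => he (le_antisymm (h0 ▸ hle e.1 e.2) (hg'.nonneg e.1 e.2))
  obtain ⟨D⟩ := ih _ hcard hg' rfl
  exact ⟨D.cons hW hp hs ht hle fun u v => by ring⟩

section Routing

variable (N) (κ : V → V → ℝ) (ι : V → ℝ)

/-- What reaches `v` when `ι` is injected and every vertex passes on what it receives in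
proportion to `κ` on its out-edges; a vertex with no `κ`-capacity keeps it, as `x / 0 = 0`.
For `0 ≤ κ ≤ f` the guard `N.topo u < N.topo v` drops only zero terms and serves termination. -/
noncomputable def routedIn (v : V) : ℝ :=
  ι v + ∑ u, if N.topo u < N.topo v then routedIn u * κ u v / ∑ w, κ u w else 0
termination_by N.topo v

noncomputable def routed (u v : V) : ℝ := N.routedIn κ ι u * κ u v / ∑ w, κ u w

variable {N κ ι}

theorem routed_eq_zero_of_kappa_eq_zero {u v : V} (h : κ u v = 0) : N.routed κ ι u v = 0 := by
  simp [routed, h]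

theorem mem_E_of_kappa_ne_zero (hκ0 : ∀ u v, 0 ≤ κ u v) (hκf : ∀ u v, κ u v ≤ N.f u v)
    {u v : V} (h : κ u v ≠ 0) : (u, v) ∈ N.E :=
  N.mem_E_of_f_pos (((hκ0 u v).lt_of_ne' h).trans_le (hκf u v))

theorem routedIn_eq (hκ0 : ∀ u v, 0 ≤ κ u v) (hκf : ∀ u v, κ u v ≤ N.f u v) (v : V) :
    N.routedIn κ ι v = ι v + ∑ u, N.routed κ ι u v := by
  rw [routedIn]
  congr 1
  refine Finset.sum_congr rfl fun u _ => ?_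
  split_ifs with h
  · rfl
  · refine (routed_eq_zero_of_kappa_eq_zero ?_).symm
    by_contra hne
    exact h (N.topo_lt _ (mem_E_of_kappa_ne_zero hκ0 hκf hne))

theorem routedIn_nonneg (hκ0 : ∀ u v, 0 ≤ κ u v) (hκf : ∀ u v, κ u v ≤ N.f u v)
    (hι : ∀ v, 0 ≤ ι v) (v : V) : 0 ≤ N.routedIn κ ι v := by
  induction v using N.edge_induction with
  | h v ih =>
  rw [routedIn_eq hκ0 hκf]
  refine add_nonneg (hι v) (Finset.sum_nonneg fun u _ => ?_)
  by_cases h : κ u v = 0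
  · exact (routed_eq_zero_of_kappa_eq_zero h).ge
  · exact div_nonneg (mul_nonneg (ih u (mem_E_of_kappa_ne_zero hκ0 hκf h)) (hκ0 u v))
      (Finset.sum_nonneg fun w _ => hκ0 u w)

theorem routed_nonneg (hκ0 : ∀ u v, 0 ≤ κ u v) (hκf : ∀ u v, κ u v ≤ N.f u v)
    (hι : ∀ v, 0 ≤ ι v) (u v : V) : 0 ≤ N.routed κ ι u v :=
  div_nonneg (mul_nonneg (routedIn_nonneg hκ0 hκf hι u) (hκ0 u v))
    (Finset.sum_nonneg fun w _ => hκ0 u w)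

theorem sum_routed_of_ne_zero {v : V} (h : ∑ w, κ v w ≠ 0) :
    ∑ w, N.routed κ ι v w = N.routedIn κ ι v := by
  simp only [routed, ← Finset.sum_div, ← Finset.mul_sum]
  exact mul_div_cancel_right₀ _ h

theorem sum_routed_le (hκ0 : ∀ u v, 0 ≤ κ u v) (hκf : ∀ u v, κ u v ≤ N.f u v)
    (hι : ∀ v, 0 ≤ ι v) (v : V) : ∑ w, N.routed κ ι v w ≤ N.routedIn κ ι v := by
  by_cases h : ∑ w, κ v w = 0
  · simpa [routed, h] using routedIn_nonneg hκ0 hκf hι v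
  · exact (sum_routed_of_ne_zero h).le

/-- No vertex receives more than the total injection: the vertices up to `v` in topological
order absorb everything they receive except what they pass on to each other. -/
theorem routedIn_le_sum (hκ0 : ∀ u v, 0 ≤ κ u v) (hκf : ∀ u v, κ u v ≤ N.f u v)
    (hι : ∀ v, 0 ≤ ι v) (v : V) : N.routedIn κ ι v ≤ ∑ u, ι u := by
  set S := Finset.univ.filter fun x => N.topo x ≤ N.topo v
  have hvS : v ∈ S := by simp [S]
  have hlt : ∀ x y, N.routed κ ι x y ≠ 0 → N.topo x < N.topo y := fun x y h =>
    N.topo_lt _ (mem_E_of_kappa_ne_zero hκ0 hκf fun h0 => h (routed_eq_zero_of_kappa_eq_zero h0))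
  have hin : ∑ y ∈ S, N.routedIn κ ι y =
      ∑ y ∈ S, ι y + ∑ y ∈ S, ∑ x ∈ S, N.routed κ ι x y := by
    rw [← Finset.sum_add_distrib]
    refine Finset.sum_congr rfl fun y hy => ?_
    rw [routedIn_eq hκ0 hκf, Finset.sum_subset (Finset.subset_univ S)]
    intro x _ hx
    by_contra hne
    simp only [S, Finset.mem_filter, Finset.mem_univ, true_and] at hx hy
    exact hx ((hlt x y hne).le.trans hy)
  have hpass : ∑ y ∈ S, ∑ x ∈ S, N.routed κ ι x y ≤ ∑ x ∈ S.erase v, N.routedIn κ ι x := by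
    rw [Finset.sum_comm, ← Finset.sum_erase_add _ _ hvS]
    have hv0 : ∑ y ∈ S, N.routed κ ι v y = 0 := by
      refine Finset.sum_eq_zero fun y hy => ?_
      by_contra hne
      simp only [S, Finset.mem_filter, Finset.mem_univ, true_and] at hy
      exact (hlt v y hne).not_ge hy
    rw [hv0, add_zero]
    refine Finset.sum_le_sum fun x _ => le_trans ?_ (sum_routed_le hκ0 hκf hι x)
    exact Finset.sum_le_sum_of_subset_of_nonneg (Finset.subset_univ S)
      fun y _ _ => routed_nonneg hκ0 hκf hι x y
  have hιS : ∑ y ∈ S, ι y ≤ ∑ u, ι u :=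
    Finset.sum_le_sum_of_subset_of_nonneg (Finset.subset_univ S) fun u _ _ => hι u
  linarith [Finset.add_sum_erase S (N.routedIn κ ι) hvS]

theorem topo_le_of_routedIn_ne_zero (hκ0 : ∀ u v, 0 ≤ κ u v) (hκf : ∀ u v, κ u v ≤ N.f u v)
    {k : ℕ} (hι : ∀ u, ι u ≠ 0 → k ≤ N.topo u) (v : V) (hv : N.routedIn κ ι v ≠ 0) :
    k ≤ N.topo v := by
  induction v using N.edge_induction with
  | h v ih =>
  by_cases hιv : ι v = 0
  · rw [routedIn_eq hκ0 hκf, hιv, zero_add] at hv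
    obtain ⟨u, -, hu⟩ := Finset.exists_ne_zero_of_sum_ne_zero hv
    have hκ : κ u v ≠ 0 := fun h0 => hu (routed_eq_zero_of_kappa_eq_zero h0)
    have hE := mem_E_of_kappa_ne_zero hκ0 hκf hκ
    exact (ih u hE fun h0 => hu (by simp [routed, h0])).trans (N.topo_lt _ hE).le
  · exact hι v hιv

theorem routed_le_of_routedIn_le (hκ0 : ∀ u v, 0 ≤ κ u v) {u : V}
    (h : N.routedIn κ ι u ≤ ∑ w, κ u w) (v : V) : N.routed κ ι u v ≤ κ u v := by
  rcases (Finset.sum_nonneg fun w _ => hκ0 u w).eq_or_lt with h0 | hpos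
  · rw [routed, ← h0, div_zero]
    exact hκ0 u v
  · rw [routed, div_le_iff₀ hpos]
    exact (mul_le_mul_of_nonneg_right h (hκ0 u v)).trans_eq (mul_comm _ _)

theorem routedIn_le_sum_kappa (hκ0 : ∀ u v, 0 ≤ κ u v) (hκf : ∀ u v, κ u v ≤ N.f u v)
    (hι : ∀ v, 0 ≤ ι v)
    (hcap : ∀ v, v ≠ N.t → (ι v = 0 ∧ ∑ u, κ u v ≤ ∑ w, κ v w) ∨ ∑ u, ι u ≤ ∑ w, κ v w)
    (v : V) (hv : v ≠ N.t) : N.routedIn κ ι v ≤ ∑ w, κ v w := by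
  induction v using N.edge_induction with
  | h v ih =>
  rcases hcap v hv with ⟨hι0, hin⟩ | hmass
  · rw [routedIn_eq hκ0 hκf, hι0, zero_add]
    refine (Finset.sum_le_sum fun u _ => ?_).trans hin
    by_cases hκ : κ u v = 0
    · exact (routed_eq_zero_of_kappa_eq_zero hκ).trans_le (hκ0 u v)
    · have hE := mem_E_of_kappa_ne_zero hκ0 hκf hκ
      exact routed_le_of_routedIn_le hκ0 (ih u hE (N.ne_t_of_mem_E hE)) v
  · exact (routedIn_le_sum hκ0 hκf hι v).trans hmass

end Routing

variable (N) in
structure IsFlowFrom (β : V) (c : ℝ) (g : V → V → ℝ) : Prop where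
  nonneg : ∀ u v, 0 ≤ g u v
  le_f : ∀ u v, g u v ≤ N.f u v
  topo_le : ∀ u v, g u v ≠ 0 → N.topo β ≤ N.topo u
  conserve : ∀ v, v ≠ N.t → ∑ w, g v w = (if v = β then c else 0) + ∑ u, g u v

variable {κ : V → V → ℝ}

theorem IsFlowFrom.mem_E {β : V} {c : ℝ} {g : V → V → ℝ} (hg : N.IsFlowFrom β c g) {u v : V}
    (h : g u v ≠ 0) : (u, v) ∈ N.E :=
  N.mem_E_of_f_pos (((hg.nonneg u v).lt_of_ne' h).trans_le (hg.le_f u v))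

theorem isFlowFrom_routed (hκ0 : ∀ u v, 0 ≤ κ u v) (hκf : ∀ u v, κ u v ≤ N.f u v) {β : V}
    {c : ℝ} (hc : 0 ≤ c)
    (hcap : ∀ v, v ≠ N.t → (v ≠ β ∧ ∑ u, κ u v ≤ ∑ w, κ v w) ∨ c ≤ ∑ w, κ v w) :
    N.IsFlowFrom β c (N.routed κ fun v => if v = β then c else 0) := by
  set ι : V → ℝ := fun v => if v = β then c else 0
  have hι : ∀ v, 0 ≤ ι v := fun v => by
    simp only [ι]
    split_ifs
    exacts [hc, le_rfl]
  have hle := routedIn_le_sum_kappa hκ0 hκf hι fun v hv =>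
    (hcap v hv).imp (fun h => ⟨if_neg h.1, h.2⟩) fun h => by simpa [ι] using h
  refine ⟨routed_nonneg hκ0 hκf hι, fun u v => ?_, fun u v h => ?_, fun v hv => ?_⟩
  · by_cases hκ : κ u v = 0
    · exact (routed_eq_zero_of_kappa_eq_zero hκ).trans_le (N.f_nonneg u v)
    · have hE := mem_E_of_kappa_ne_zero hκ0 hκf hκ
      exact (routed_le_of_routedIn_le hκ0 (hle u (N.ne_t_of_mem_E hE)) v).trans (hκf u v)
  · refine topo_le_of_routedIn_ne_zero (ι := ι) hκ0 hκf (fun u hu => ?_) u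
      fun h0 => h (by simp [routed, h0])
    obtain rfl : u = β := by_contra fun hne => hu (if_neg hne)
    exact le_rfl
  · calc ∑ w, N.routed κ ι v w = N.routedIn κ ι v := by
          by_cases h : ∑ w, κ v w = 0
          · have h0 : N.routedIn κ ι v = 0 :=
              le_antisymm (h ▸ hle v hv) (routedIn_nonneg hκ0 hκf hι v)
            simp [routed, h0]
          · exact sum_routed_of_ne_zero h
      _ = _ := routedIn_eq hκ0 hκf v

theorem exists_isFlowFrom {β : V} {c : ℝ} (hc : 0 ≤ c) (hβ : β ≠ N.t → c ≤ N.flowOut β) :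
    ∃ g, N.IsFlowFrom β c g :=
  ⟨_, isFlowFrom_routed (κ := N.f) N.f_nonneg (fun _ _ => le_rfl) hc fun v hv =>
    if h : v = β then Or.inr (h ▸ hβ (h ▸ hv)) else Or.inl ⟨h, N.flowIn_le_flowOut hv⟩⟩

theorem exists_isFlowFrom_avoiding {β γ δ : V} {c : ℝ} (hc : 0 ≤ c) (hβ : c ≤ N.flowIn β)
    (hγ : c ≤ N.flowOut γ - N.f γ δ) : ∃ g, N.IsFlowFrom β c g ∧ g γ δ = 0 := by
  set κ : V → V → ℝ := fun u v => if u = γ ∧ v = δ then 0 else N.f u v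
  have hκ0 : ∀ u v, 0 ≤ κ u v := fun u v => by
    simp only [κ]
    split_ifs
    exacts [le_rfl, N.f_nonneg u v]
  have hκf : ∀ u v, κ u v ≤ N.f u v := fun u v => by
    simp only [κ]
    split_ifs
    exacts [N.f_nonneg u v, le_rfl]
  have hout : ∀ v, v ≠ γ → ∑ w, κ v w = N.flowOut v := fun v hv => by
    simp [κ, hv, FlowGraph.flowOut]
  have houtγ : N.flowOut γ - N.f γ δ = ∑ w, κ γ w := by
    simp [κ, FlowGraph.flowOut, Finset.sum_ite, Finset.filter_ne']
  refine ⟨_, isFlowFrom_routed hκ0 hκf hc fun v hv => ?_,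
    routed_eq_zero_of_kappa_eq_zero (by simp [κ])⟩
  by_cases hvγ : v = γ
  · exact Or.inr (hvγ ▸ houtγ ▸ hγ)
  rw [hout v hvγ]
  by_cases hvβ : v = β
  · exact Or.inr (hvβ ▸ hβ.trans (N.flowIn_le_flowOut (hvβ ▸ hv)))
  · exact Or.inl ⟨hvβ, (Finset.sum_le_sum fun u _ => hκf u v).trans (N.flowIn_le_flowOut hv)⟩

variable (N) in
noncomputable def rev : FlowNetwork V where
  E := N.E.map (Equiv.prodComm V V).toEmbedding
  f u v := N.f v u
  pos e he := N.pos _ (by simpa [Finset.mem_map_equiv] using he)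
  zero_off u v h := N.zero_off v u (by simpa [Finset.mem_map_equiv] using h)
  topo v := Finset.univ.sup N.topo - N.topo v
  topo_inj u v h := by
    have := Finset.le_sup (f := N.topo) (Finset.mem_univ u)
    have := Finset.le_sup (f := N.topo) (Finset.mem_univ v)
    exact N.topo_inj (by simp only at h; omega)
  topo_lt e he := by
    have : N.topo e.2 < N.topo e.1 := N.topo_lt e.swap (by simpa [Finset.mem_map_equiv] using he)
    have := Finset.le_sup (f := N.topo) (Finset.mem_univ e.1)
    omega
  conserve v := fun ⟨u, hu⟩ ⟨w, hw⟩ => (N.conserve v ⟨w, by simpa [Finset.mem_map_equiv] using hw⟩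
    ⟨u, by simpa [Finset.mem_map_equiv] using hu⟩).symm
  s := N.t
  t := N.s
  s_source u h := N.t_sink u (by simpa [Finset.mem_map_equiv] using h)
  t_sink w h := N.s_source w (by simpa [Finset.mem_map_equiv] using h)
  s_unique v h := N.t_unique v fun w hw => h w (by simpa [Finset.mem_map_equiv] using hw)
  t_unique v h := N.s_unique v fun u hu => h u (by simpa [Finset.mem_map_equiv] using hu)

@[simp] theorem mem_rev_E {u v : V} : (u, v) ∈ N.rev.E ↔ (v, u) ∈ N.E := by
  simp [rev, Finset.mem_map_equiv]

@[simp] theorem rev_f (u v : V) : N.rev.f u v = N.f v u := rfl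

theorem rev_topo_le_rev_topo {u v : V} : N.rev.topo u ≤ N.rev.topo v ↔ N.topo v ≤ N.topo u := by
  have := Finset.le_sup (f := N.topo) (Finset.mem_univ u)
  have := Finset.le_sup (f := N.topo) (Finset.mem_univ v)
  change Finset.univ.sup N.topo - N.topo u ≤ Finset.univ.sup N.topo - N.topo v ↔ _
  omega

theorem IsSubflow.of_rev {g : V → V → ℝ} (hg : N.rev.IsSubflow g) :
    N.IsSubflow fun u v => g v u where
  nonneg u v := hg.nonneg v u
  le_f u v := hg.le_f v u
  conserve v hs ht := (hg.conserve v ht hs).symm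

/-- Gluing a flow from `s` into `α`, the edge `(α, β)`, and a flow from `β` to `t`; the three
pieces live on disjoint parts of the topological order. -/
theorem isSubflow_splice {α β : V} (hαβ : N.topo α < N.topo β) {up down : V → V → ℝ}
    (hup : N.rev.IsFlowFrom α (N.f α β) up) (hdown : N.IsFlowFrom β (N.f α β) down) :
    N.IsSubflow fun u v => up v u + (if u = α ∧ v = β then N.f u v else 0) + down u v where
  nonneg u v := by
    have := hup.nonneg v u
    have := hdown.nonneg u v
    have := N.f_nonneg u v
    split_ifs <;> linarith
  le_f u v := by
    by_cases hv : N.topo v ≤ N.topo α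
    · have hd : down u v = 0 := by
        by_contra h
        have := hdown.topo_le u v h
        have : N.topo u < N.topo v := N.topo_lt _ (hdown.mem_E h)
        omega
      have hm : ¬(u = α ∧ v = β) := by
        rintro ⟨rfl, rfl⟩
        omega
      simpa [hd, hm] using hup.le_f v u
    · have hu : up v u = 0 := by_contra fun h => hv (rev_topo_le_rev_topo.1 (hup.topo_le v u h))
      by_cases hm : u = α ∧ v = β
      · obtain ⟨rfl, rfl⟩ := hm
        have hd : down u v = 0 := by_contra fun h => (hdown.topo_le u v h).not_gt hαβ
        simp [hu, hd]
      · simpa [hu, hm] using hdown.le_f u v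
  conserve v hs ht := by
    have hin : ∑ u, (if u = α ∧ v = β then N.f u v else 0) =
        if v = β then N.f α β else 0 := by
      by_cases h : v = β <;> simp [h]
    have hout : ∑ w, (if v = α ∧ w = β then N.f v w else 0) =
        if v = α then N.f α β else 0 := by
      by_cases h : v = α <;> simp [h]
    simp only [Finset.sum_add_distrib, hin, hout, hup.conserve v hs, hdown.conserve v ht]
    ring

theorem exists_subflow_of_le_flowOut_sub {α β γ δ : V} (ha : (α, β) ∈ N.E) (hb : (γ, δ) ∈ N.E)
    (hτ : N.topo β ≤ N.topo γ) (hcap : N.f α β ≤ N.flowOut γ - N.f γ δ) :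
    ∃ g, N.IsSubflow g ∧ g α β = N.f α β ∧ g γ δ = 0 := by
  have hαβ : N.topo α < N.topo β := N.topo_lt _ ha
  have hγδ : N.topo γ < N.topo δ := N.topo_lt _ hb
  obtain ⟨down, hdown, hdownb⟩ :=
    N.exists_isFlowFrom_avoiding (N.f_nonneg α β) (N.f_le_flowIn α β) hcap
  obtain ⟨up, hup⟩ := N.rev.exists_isFlowFrom (β := α) (N.f_nonneg α β) fun hs =>
    (N.f_le_flowOut α β).trans (N.flowIn_eq_flowOut hs (N.ne_t_of_mem_E ha)).ge
  refine ⟨_, isSubflow_splice hαβ hup hdown, ?_, ?_⟩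
  · have hu : up β α = 0 :=
      by_contra fun h => (rev_topo_le_rev_topo.1 (hup.topo_le β α h)).not_gt hαβ
    have hd : down α β = 0 := by_contra fun h => (hdown.topo_le α β h).not_gt hαβ
    simp [hu, hd]
  · have hu : up δ γ = 0 := by_contra fun h => by
      have := rev_topo_le_rev_topo.1 (hup.topo_le δ γ h)
      omega
    have hm : ¬(γ = α ∧ δ = β) := by
      rintro ⟨rfl, rfl⟩
      omega
    simp [hu, hm, hdownb]

theorem exists_subflow_separating {α β γ δ : V} (ha : (α, β) ∈ N.E) (hb : (γ, δ) ∈ N.E)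
    (hτ : N.topo β ≤ N.topo γ) (hin : 2 * N.f α β ≤ N.flowIn β)
    (hout : 2 * N.f γ δ ≤ N.flowOut γ) :
    ∃ g, N.IsSubflow g ∧ g α β = N.f α β ∧ g γ δ = 0 := by
  rcases le_or_gt (N.f α β) (N.f γ δ) with hle | hlt
  · exact exists_subflow_of_le_flowOut_sub ha hb hτ (by linarith)
  · obtain ⟨h, hh, hhb, hha⟩ := exists_subflow_of_le_flowOut_sub (N := N.rev) (mem_rev_E.2 hb)
      (mem_rev_E.2 ha) (rev_topo_le_rev_topo.2 hτ)
      (show N.f γ δ ≤ N.flowIn β - N.f α β by linarith)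
    exact ⟨_, hh.of_rev.compl, by simp [hha], by simp [hhb]⟩

theorem IsSubflow.exists_decomp_separating {g : V → V → ℝ} (hg : N.IsSubflow g) {α β γ δ : V}
    (ha : g α β = N.f α β) (hb : g γ δ = 0) :
    ∃ D : N.Decomp, ∀ i,
      ¬ Traverses (D.path i) (D.len i) α β ∨ ¬ Traverses (D.path i) (D.len i) γ δ := by
  obtain ⟨D₁⟩ := hg.nonempty_pathDecomp
  obtain ⟨D₂⟩ := hg.compl.nonempty_pathDecomp
  refine ⟨⟨D₁.n + D₂.n, Fin.append D₁.path D₂.path, Fin.append D₁.len D₂.len,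
    Fin.append D₁.w D₂.w, fun i => ?_, fun i => ?_, fun i => ?_, fun i => ?_, fun e _ => ?_⟩,
    fun i => ?_⟩
  all_goals try induction i using Fin.addCases
  · simpa using D₁.w_pos _
  · simpa using D₂.w_pos _
  · simpa using (D₁.pos _).isPath hg
  · simpa using (D₂.pos _).isPath hg.compl
  · simpa using D₁.starts _
  · simpa using D₂.starts _
  · simpa using D₁.ends _
  · simpa using D₂.ends _
  · simp only [Fin.sum_univ_add, Fin.append_left, Fin.append_right, sum_ite_eq_mul_pathFlow,
      D₁.sum_eq, D₂.sum_eq, add_sub_cancel]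
  · simpa using Or.inr ((D₁.pos _).not_traverses hb)
  · simpa using Or.inl ((D₂.pos _).not_traverses (by simp [ha]))

theorem not_safePath_of_not_uniqueMaxIn_of_not_uniqueMaxOut {q : ℕ → V} {l i j : ℕ}
    (hq : N.IsPath q l) (hij : i < j) (hjl : j < l) (hi : ¬ N.UniqueMaxIn (q i) (q (i + 1)))
    (hj : ¬ N.UniqueMaxOut (q j) (q (j + 1))) : ¬ N.SafePath q l := by
  have ha := hq i (by omega)
  have hb := hq j hjl
  have hτ : N.topo (q (i + 1)) ≤ N.topo (q j) :=
    hq.topo_strictMonoOn.monotoneOn (by simp; omega) (by simp; omega) (by omega)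
  obtain ⟨g, hg, hga, hgb⟩ := exists_subflow_separating ha hb hτ
    (N.two_mul_le_flowIn_of_not_uniqueMaxIn ha hi) (N.two_mul_le_flowOut_of_not_uniqueMaxOut hb hj)
  obtain ⟨D, hD⟩ := hg.exists_decomp_separating hga hgb
  intro hsafe
  obtain ⟨k, hk⟩ := hsafe D
  exact (hD k).elim (· (hk.traverses (by omega))) (· (hk.traverses hjl))

end FlowNetwork

/-- Representative edge theorem: every maximal safe path of length at least 2 has a
representative edge such that all edges after it are unique maximum outgoing edges of
their tails and all edges before it are unique maximum incoming edges of their heads. -/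
theorem maximal_safe_path_representative_edge (N : FlowNetwork V) (q : ℕ → V) (l : ℕ)
    (hl : 2 ≤ l) (hp : N.toFlowGraph.IsPath q l)
    (hmax : FlowNetwork.MaximalSafePath N q l) :
    ∃ r < l, (∀ j < r, N.toFlowGraph.UniqueMaxIn (q j) (q (j + 1))) ∧
      (∀ j, r < j → j < l → N.toFlowGraph.UniqueMaxOut (q j) (q (j + 1))) := by
  let P m := ∀ j < m, N.toFlowGraph.UniqueMaxIn (q j) (q (j + 1))
  have hP : P (Nat.findGreatest P (l - 1)) := Nat.findGreatest_spec (Nat.zero_le _) (by simp [P])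
  set r := Nat.findGreatest P (l - 1)
  have hrl : r ≤ l - 1 := Nat.findGreatest_le (l - 1)
  refine ⟨r, by omega, hP, fun j hrj hjl => ?_⟩
  by_contra hj
  refine N.not_safePath_of_not_uniqueMaxIn_of_not_uniqueMaxOut hp hrj hjl (fun hr => ?_) hj hmax.1
  refine Nat.findGreatest_is_greatest (lt_add_one r) (by omega) fun j' hj' => ?_
  rcases Nat.lt_succ_iff_lt_or_eq.1 hj' with h | rfl
  exacts [hP j' h, hr]
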